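/- arXiv:0805.0099 — 8 statements merged into one kernel-verified Lean document; each statement's English description precedes it below -/
import Mathlib

section
/- Let ρ(θ) = Σ_k p_k(θ)|w_k(θ)⟩⟨w_k(θ)| be a smooth one-parameter family of density matrices with p_k(θ) > 0 and orthonormal eigenvectors. Then C_L(θ) − H_{SLD}(θ) = 16 Σ_{j<k} (p_j p_k)/(p_j + p_k) |⟨w_j'|w_k⟩|^2 ≥ 0, where H_{SLD}(θ) = Σ_k (p_k')^2/p_k + 4 Σ_{j<k} (p_j − p_k)^2/(p_j + p_k) |⟨w_j'|w_k⟩|^2 and C_L(θ) = Σ_i (p_i')^2/p_i + 4 Σ_{j<k} (p_j + p_k)|⟨w_j'|w_k⟩|^2. -/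
open scoped BigOperators

/- The Morozova–Chentsov weights of the two informations differ, pair by pair, by
`4 (p_j + p_k) - 4 (p_j - p_k)² / (p_j + p_k) = 16 p_j p_k / (p_j + p_k)`, which is positive;
the classical Fisher parts `Σ (p_k')² / p_k` cancel. -/

theorem add_sub_sq_sub_div_add {a b : ℝ} (h : a + b ≠ 0) :
    (a + b) - (a - b) ^ 2 / (a + b) = 4 * (a * b / (a + b)) := by
  field_simp
  ring

section PairSums

variable {ι : Type*} [Fintype ι] [LT ι] [DecidableRel (α := ι) (· < ·)]

theorem sum_pairs_add_sub_sum_pairs_sq_sub_div (q : ι → ℝ) (hq : ∀ i, 0 < q i)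
    (x : ι → ι → ℝ) :
    4 * ∑ j, ∑ k, (if j < k then (q j + q k) * x j k else 0)
      - 4 * ∑ j, ∑ k, (if j < k then (q j - q k) ^ 2 / (q j + q k) * x j k else 0)
      = 16 * ∑ j, ∑ k, (if j < k then q j * q k / (q j + q k) * x j k else 0) := by
  have hpair : ∀ j k,
      (if j < k then (q j + q k) * x j k else 0)
        - (if j < k then (q j - q k) ^ 2 / (q j + q k) * x j k else 0)
      = 4 * (if j < k then q j * q k / (q j + q k) * x j k else 0) := by
    intro j k
    split_ifs
    · have hjk : q j + q k ≠ 0 := (add_pos (hq j) (hq k)).ne'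
      rw [← sub_mul, add_sub_sq_sub_div_add hjk]
      ring
    · simp
  simp only [← mul_sub, ← Finset.sum_sub_distrib, hpair, ← Finset.mul_sum]
  ring

theorem sum_pairs_mul_div_add_nonneg (q : ι → ℝ) (hq : ∀ i, 0 < q i)
    (x : ι → ι → ℝ) (hx : ∀ j k, 0 ≤ x j k) :
    0 ≤ ∑ j, ∑ k, (if j < k then q j * q k / (q j + q k) * x j k else 0) := by
  refine Finset.sum_nonneg fun j _ => Finset.sum_nonneg fun k _ => ?_
  have := hq j
  have := hq k
  have := hx j k
  split_ifs <;> positivity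

end PairSums

theorem CL_sub_HSLD_one_param_general
    {d : ℕ} (p : Fin d → ℝ → ℝ) (w : Fin d → ℝ → EuclideanSpace ℂ (Fin d)) (θ : ℝ)
    (hp : ∀ i, 0 < p i θ) :
    let H : ℝ := (∑ k, (deriv (p k) θ) ^ 2 / p k θ)
      + 4 * ∑ j, ∑ k, (if j < k then ((p j θ - p k θ) ^ 2 / (p j θ + p k θ)) *
          ‖(inner ℂ (deriv (w j) θ) (w k θ) : ℂ)‖ ^ 2 else 0)
    let CL : ℝ := (∑ i, (deriv (p i) θ) ^ 2 / p i θ)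
      + 4 * ∑ j, ∑ k, (if j < k then (p j θ + p k θ) *
          ‖(inner ℂ (deriv (w j) θ) (w k θ) : ℂ)‖ ^ 2 else 0)
    CL - H = 16 * ∑ j, ∑ k, (if j < k then (p j θ * p k θ / (p j θ + p k θ)) *
        ‖(inner ℂ (deriv (w j) θ) (w k θ) : ℂ)‖ ^ 2 else 0) ∧
    H ≤ CL := by
  intro H CL
  let x : Fin d → Fin d → ℝ := fun j k => ‖(inner ℂ (deriv (w j) θ) (w k θ) : ℂ)‖ ^ 2
  have hdiff := sum_pairs_add_sub_sum_pairs_sq_sub_div (fun i => p i θ) hp x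
  have hnonneg := sum_pairs_mul_div_add_nonneg (fun i => p i θ) hp x fun j k => by positivity
  simp only [x] at hdiff hnonneg
  constructor
  · simp only [CL, H]
    linarith
  · linarith

/-- For a smooth one-parameter family of density matrices with spectral decomposition
`ρ(θ) = Σ_k p_k(θ)|w_k(θ)⟩⟨w_k(θ)|`,
`C_L(θ) − H_{SLD}(θ) = 16 Σ_{j<k} p_j p_k/(p_j+p_k) |⟨w_j'|w_k⟩|² ≥ 0`. -/
theorem CL_sub_HSLD_one_param
    {d : ℕ} (p : Fin d → ℝ → ℝ) (w : Fin d → ℝ → EuclideanSpace ℂ (Fin d)) (θ : ℝ)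
    (hp : ∀ i, 0 < p i θ)
    (hpd : ∀ i, Differentiable ℝ (p i))
    (hwd : ∀ i, Differentiable ℝ (w i))
    (hON : ∀ t : ℝ, Orthonormal ℂ (fun i => w i t)) :
    let H : ℝ := (∑ k, (deriv (p k) θ) ^ 2 / p k θ)
      + 4 * ∑ j, ∑ k, (if j < k then ((p j θ - p k θ) ^ 2 / (p j θ + p k θ)) *
          ‖(inner ℂ (deriv (w j) θ) (w k θ) : ℂ)‖ ^ 2 else 0)
    let CL : ℝ := (∑ i, (deriv (p i) θ) ^ 2 / p i θ)
      + 4 * ∑ j, ∑ k, (if j < k then (p j θ + p k θ) *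
          ‖(inner ℂ (deriv (w j) θ) (w k θ) : ℂ)‖ ^ 2 else 0)
    CL - H = 16 * ∑ j, ∑ k, (if j < k then (p j θ * p k θ / (p j θ + p k θ)) *
        ‖(inner ℂ (deriv (w j) θ) (w k θ) : ℂ)‖ ^ 2 else 0) ∧
    H ≤ CL :=
  CL_sub_HSLD_one_param_general p w θ hp
end

section
/- For a smooth one-parameter family of density matrices ρ(θ) = Σ_k p_k(θ)|w_k(θ)⟩⟨w_k(θ)| with p_k > 0, equality H_{SLD}(θ) = C_L(θ) holds if and only if ⟨w_j'(θ)|w_k(θ)⟩ = 0 for all j ≠ k. -/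
/-!
Since `|w_j⟩ ⊥ |w_k⟩` for all `θ`, differentiating gives `⟨w_j'|w_k⟩ = -conj ⟨w_k'|w_j⟩`, so the
conditions for `j < k` and for `j > k` coincide. The difference `C_L - H_SLD` is a sum over
`j < k` of `|⟨w_j'|w_k⟩|²` with the coefficients `(p_j + p_k) - (p_j - p_k)² / (p_j + p_k)
= 4 p_j p_k / (p_j + p_k) > 0`, so it vanishes iff every `⟨w_j'|w_k⟩` with `j < k` does.
-/

open scoped ComplexConjugate

theorem inner_deriv_eq_neg_conj_of_inner_eq_zero {𝕜 E : Type*} [RCLike 𝕜]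
    [NormedAddCommGroup E] [InnerProductSpace 𝕜 E] [NormedSpace ℝ E] {f g : ℝ → E} {θ : ℝ}
    (hf : DifferentiableAt ℝ f θ) (hg : DifferentiableAt ℝ g θ)
    (h : ∀ᶠ t in nhds θ, inner 𝕜 (f t) (g t) = 0) :
    inner 𝕜 (deriv f θ) (g θ) = -conj (inner 𝕜 (deriv g θ) (f θ)) := by
  have hderiv := hf.hasDerivAt.inner 𝕜 hg.hasDerivAt
  have hzero : HasDerivAt (fun t => inner 𝕜 (f t) (g t)) (0 : 𝕜) θ :=
    (hasDerivAt_const θ (0 : 𝕜)).congr_of_eventuallyEq h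
  rw [inner_conj_symm]
  linear_combination hderiv.unique hzero

theorem inner_deriv_eq_zero_comm_of_orthonormal {𝕜 E ι : Type*} [RCLike 𝕜]
    [NormedAddCommGroup E] [InnerProductSpace 𝕜 E] [NormedSpace ℝ E] {w : ι → ℝ → E} {θ : ℝ}
    (hON : ∀ t, Orthonormal 𝕜 fun i => w i t) (hwd : ∀ i, DifferentiableAt ℝ (w i) θ)
    {j k : ι} (hjk : j ≠ k) :
    inner 𝕜 (deriv (w j) θ) (w k θ) = 0 ↔ inner 𝕜 (deriv (w k) θ) (w j θ) = 0 := by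
  rw [inner_deriv_eq_neg_conj_of_inner_eq_zero (hwd j) (hwd k)
    (.of_forall fun t => (hON t).inner_eq_zero hjk), neg_eq_zero, map_eq_zero]

theorem sub_sq_div_add_lt_add {a b : ℝ} (ha : 0 < a) (hb : 0 < b) :
    (a - b) ^ 2 / (a + b) < a + b := by
  rw [div_lt_iff₀ (by positivity)]
  nlinarith [mul_pos ha hb]

theorem Finset.sum_sum_ite_lt_eq_iff {ι : Type*} [Fintype ι] [LinearOrder ι]
    {a b : ι → ι → ℝ} (hab : ∀ j k, j < k → a j k ≤ b j k) :
    ∑ j, ∑ k, (if j < k then a j k else 0) = ∑ j, ∑ k, (if j < k then b j k else 0) ↔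
      ∀ j k, j < k → a j k = b j k := by
  have hle : ∀ j k, (if j < k then a j k else 0) ≤ (if j < k then b j k else 0) := by
    intro j k
    split_ifs with h
    exacts [hab j k h, le_rfl]
  rw [Finset.sum_eq_sum_iff_of_le fun j _ => Finset.sum_le_sum fun k _ => hle j k]
  simp only [Finset.mem_univ, forall_const,
    Finset.sum_eq_sum_iff_of_le fun k (_ : k ∈ Finset.univ) => hle _ k]
  refine forall₂_congr fun j k => ?_
  split_ifs with h <;> simp [h]

theorem HSLD_eq_CL_iff_one_param_general
    {d : ℕ} (p : Fin d → ℝ → ℝ) (w : Fin d → ℝ → EuclideanSpace ℂ (Fin d)) (θ : ℝ)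
    (hp : ∀ i, 0 < p i θ)
    (hwd : ∀ i, Differentiable ℝ (w i))
    (hON : ∀ t : ℝ, Orthonormal ℂ (fun i => w i t)) :
    let H : ℝ := (∑ k, (deriv (p k) θ) ^ 2 / p k θ)
      + 4 * ∑ j, ∑ k, (if j < k then ((p j θ - p k θ) ^ 2 / (p j θ + p k θ)) *
          ‖(inner ℂ (deriv (w j) θ) (w k θ) : ℂ)‖ ^ 2 else 0)
    let CL : ℝ := (∑ i, (deriv (p i) θ) ^ 2 / p i θ)
      + 4 * ∑ j, ∑ k, (if j < k then (p j θ + p k θ) *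
          ‖(inner ℂ (deriv (w j) θ) (w k θ) : ℂ)‖ ^ 2 else 0)
    (H = CL ↔ ∀ j k, j ≠ k → (inner ℂ (deriv (w j) θ) (w k θ) : ℂ) = 0) := by
  intro H CL
  have hcoef : ∀ j k, (p j θ - p k θ) ^ 2 / (p j θ + p k θ) < p j θ + p k θ :=
    fun j k => sub_sq_div_add_lt_add (hp j) (hp k)
  have hlt_iff_ne : (∀ j k, j < k → (inner ℂ (deriv (w j) θ) (w k θ) : ℂ) = 0) ↔
      ∀ j k, j ≠ k → (inner ℂ (deriv (w j) θ) (w k θ) : ℂ) = 0 := by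
    refine ⟨fun h j k hjk => ?_, fun h j k hjk => h j k hjk.ne⟩
    rcases hjk.lt_or_gt with hlt | hgt
    · exact h j k hlt
    · exact (inner_deriv_eq_zero_comm_of_orthonormal hON (fun i => hwd i θ) hjk).2 (h k j hgt)
  rw [← hlt_iff_ne, add_right_inj, mul_right_inj' four_ne_zero,
    Finset.sum_sum_ite_lt_eq_iff fun j k _ =>
      mul_le_mul_of_nonneg_right (hcoef j k).le (sq_nonneg _)]
  refine forall₃_congr fun j k _ => ?_
  rw [mul_eq_mul_right_iff, or_iff_right (hcoef j k).ne]
  simp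

/-- For a smooth one-parameter family of density matrices with spectral decomposition
`ρ(θ) = Σ_k p_k(θ)|w_k(θ)⟩⟨w_k(θ)|` with `p_k > 0`, equality `H_{SLD}(θ) = C_L(θ)`
holds iff `⟨w_j'(θ)|w_k(θ)⟩ = 0` for all `j ≠ k`. -/
theorem HSLD_eq_CL_iff_one_param
    {d : ℕ} (p : Fin d → ℝ → ℝ) (w : Fin d → ℝ → EuclideanSpace ℂ (Fin d)) (θ : ℝ)
    (hp : ∀ i, 0 < p i θ)
    (hpd : ∀ i, Differentiable ℝ (p i))
    (hwd : ∀ i, Differentiable ℝ (w i))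
    (hON : ∀ t : ℝ, Orthonormal ℂ (fun i => w i t)) :
    let H : ℝ := (∑ k, (deriv (p k) θ) ^ 2 / p k θ)
      + 4 * ∑ j, ∑ k, (if j < k then ((p j θ - p k θ) ^ 2 / (p j θ + p k θ)) *
          ‖(inner ℂ (deriv (w j) θ) (w k θ) : ℂ)‖ ^ 2 else 0)
    let CL : ℝ := (∑ i, (deriv (p i) θ) ^ 2 / p i θ)
      + 4 * ∑ j, ∑ k, (if j < k then (p j θ + p k θ) *
          ‖(inner ℂ (deriv (w j) θ) (w k θ) : ℂ)‖ ^ 2 else 0)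
    (H = CL ↔ ∀ j k, j ≠ k → (inner ℂ (deriv (w j) θ) (w k θ) : ℂ) = 0) :=
  HSLD_eq_CL_iff_one_param_general p w θ hp hwd hON
end

section
/- Let |w(θ)⟩ be a smooth curve of unit vectors in ℂ^d and α : ℝ → ℝ a smooth function; set |v(θ)⟩ = exp(i α(θ))|w(θ)⟩. Then |⟨v'(θ)|v(θ)⟩|^2 = |−i α'(θ) + ⟨w'(θ)|w(θ)⟩|^2; in particular, the term Σ_k p_k |⟨v_k'|v_k⟩|^2 appearing in C_Υ depends on the choice of phases α_k, so C_Υ is not invariant under phase changes of the eigenvectors. -/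
/-! The derivative of `e^{iα} w` is `e^{iα} (iα' w + w')`. The unimodular factor `e^{iα}` drops
out of the inner product with `e^{iα} w`, and `⟨iα' w, w⟩ = -iα'` since `w` is a unit vector. -/

open Complex

section PhaseChange

variable {E : Type*} [NormedAddCommGroup E] [InnerProductSpace ℂ E]

theorem inner_smul_smul_of_norm_eq_one {c : ℂ} (hc : ‖c‖ = 1) (x y : E) :
    inner ℂ (c • x) (c • y) = inner ℂ x y := by
  rw [inner_smul_left, inner_smul_right, ← mul_assoc, conj_mul', hc]
  simp

theorem HasDerivAt.cexp_I_mul_ofReal_smul {w : ℝ → E} {w' : E} {α : ℝ → ℝ} {a θ : ℝ}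
    (hw : HasDerivAt w w' θ) (hα : HasDerivAt α a θ) :
    HasDerivAt (fun t => cexp (I * α t) • w t) (cexp (I * α θ) • ((I * a) • w θ + w')) θ := by
  have hphase : HasDerivAt (fun t => cexp (I * α t)) (cexp (I * α θ) * (I * a)) θ :=
    (hα.ofReal_comp.const_mul I).cexp
  exact (hphase.smul hw).congr_deriv (by rw [smul_add, smul_smul, add_comm])

theorem inner_I_mul_smul_add_left_of_norm_eq_one {x : E} (hx : ‖x‖ = 1) (a : ℝ) (y : E) :
    inner ℂ ((I * a) • x + y) x = -I * a + inner ℂ y x := by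
  rw [inner_add_left, inner_smul_left, inner_self_eq_norm_sq_to_K, hx]
  simp

end PhaseChange

/-- Under a phase change `|v(θ)⟩ = e^{iα(θ)}|w(θ)⟩` of a smooth curve of unit vectors,
`|⟨v'(θ)|v(θ)⟩|² = |−i α'(θ) + ⟨w'(θ)|w(θ)⟩|²`; hence the term
`Σ_k p_k |⟨v_k'|v_k⟩|²` in `C_Υ` depends on the choice of phases. -/
theorem inner_deriv_self_phase_dependence
    {d : ℕ} (w : ℝ → EuclideanSpace ℂ (Fin d)) (α : ℝ → ℝ)
    (hw : Differentiable ℝ w) (hα : Differentiable ℝ α)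
    (hunit : ∀ θ, ‖w θ‖ = 1)
    (v : ℝ → EuclideanSpace ℂ (Fin d))
    (hv : ∀ θ, v θ = Complex.exp (Complex.I * (α θ : ℂ)) • w θ) :
    ∀ θ : ℝ,
      ‖(inner ℂ (deriv v θ) (v θ) : ℂ)‖ ^ 2
        = ‖-Complex.I * Complex.ofReal (deriv α θ)
            + (inner ℂ (deriv w θ) (w θ) : ℂ)‖ ^ 2 := by
  intro θ
  obtain rfl : v = fun t => cexp (I * α t) • w t := funext hv
  rw [((hw θ).hasDerivAt.cexp_I_mul_ofReal_smul (hα θ).hasDerivAt).deriv,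
    inner_smul_smul_of_norm_eq_one (norm_exp_I_mul_ofReal _),
    inner_I_mul_smul_add_left_of_norm_eq_one (hunit θ)]
end

section
/- Let 0 < ε < 1/3 and 0 ≤ r < 1. For the family ρ(θ) = (1−2ε)|v_1⟩⟨v_1| + ε|v_2(θ)⟩⟨v_2(θ)| + ε|v_3(θ)⟩⟨v_3(θ)| (with |v_1⟩ = (1,0,0)^T, |v_2(θ)⟩ = (0,cos θ, sin θ)^T, |v_3(θ)⟩ = (0,−sin θ, cos θ)^T) and its image under the depolarizing channel E(ρ) = rρ + (1−r)/3 · I, one has C_L(E(ρ(θ))) − C_L(ρ(θ)) = (1−r)(8/3 − 8ε) > 0. Hence C_L strictly increases under this TP-CP map, so C_L is not a monotone metric. -/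
/-!
The eigenvalues of `ρ(θ)` and of `E(ρ(θ))` do not depend on `θ`, so only the eigenvector term of
`C_L` survives. Of the overlaps `⟨v_j'|v_k⟩` with `j < k` only `⟨v_2'|v_3⟩ = 1` is nonzero, hence
`C_L = 4 (p_2 + p_3)`. The channel moves the small eigenvalue `ε` towards `1/3`, which raises
`p_2 + p_3` from `2ε` to `2rε + 2(1 - r)/3` as soon as `ε < 1/3` and `r < 1`.
-/

open Complex

/-- `C_L` at `θ` of a state with eigenvalues `e` (constant in `θ`) and eigenvectors `v j θ`. -/
noncomputable def quantumInfoCL {n : ℕ} (v : Fin n → ℝ → Fin n → ℂ) (e : Fin n → ℝ)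
    (θ : ℝ) : ℝ :=
  (∑ i, (deriv (fun _ : ℝ => e i) θ) ^ 2 / e i)
    + 4 * ∑ j, ∑ k, (if j < k then (e j + e k) *
        ‖∑ i, (starRingEnd ℂ) (deriv (fun t => v j t i) θ) * v k θ i‖ ^ 2
      else 0)

theorem quantumInfoCL_eq_overlap_sum {n : ℕ} (v : Fin n → ℝ → Fin n → ℂ) (e : Fin n → ℝ)
    (θ : ℝ) :
    quantumInfoCL v e θ = 4 * ∑ j, ∑ k, (if j < k then (e j + e k) *
        ‖∑ i, (starRingEnd ℂ) (deriv (fun t => v j t i) θ) * v k θ i‖ ^ 2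
      else 0) := by
  simp [quantumInfoCL]

theorem Fin.sum_sum_ite_lt_three {M : Type*} [AddCommMonoid M] (f : Fin 3 → Fin 3 → M) :
    ∑ j, ∑ k, (if j < k then f j k else 0) = f 0 1 + f 0 2 + f 1 2 := by
  simp [Fin.sum_univ_three, add_assoc]

noncomputable def rotatedFrame : Fin 3 → ℝ → Fin 3 → ℂ :=
  ![fun _ => ![1, 0, 0],
    fun θ => ![0, (Real.cos θ : ℂ), (Real.sin θ : ℂ)],
    fun θ => ![0, (-(Real.sin θ) : ℂ), (Real.cos θ : ℂ)]]

noncomputable def rotatedFrameDeriv : Fin 3 → ℝ → Fin 3 → ℂ :=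
  ![fun _ => 0,
    fun θ => ![0, (-(Real.sin θ) : ℂ), (Real.cos θ : ℂ)],
    fun θ => ![0, (-(Real.cos θ) : ℂ), (-(Real.sin θ) : ℂ)]]

theorem hasDerivAt_rotatedFrame (j i : Fin 3) (θ : ℝ) :
    HasDerivAt (fun t => rotatedFrame j t i) (rotatedFrameDeriv j θ i) θ := by
  have hcos := (Real.hasDerivAt_cos θ).ofReal_comp.congr_deriv (Complex.ofReal_neg _)
  have hsin := (Real.hasDerivAt_sin θ).ofReal_comp
  fin_cases j <;> fin_cases i <;>
    simp only [rotatedFrame, rotatedFrameDeriv] <;>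
    first | exact hasDerivAt_const _ _ | exact hcos | exact hsin | exact hcos.neg | exact hsin.neg

theorem deriv_rotatedFrame (j i : Fin 3) (θ : ℝ) :
    deriv (fun t => rotatedFrame j t i) θ = rotatedFrameDeriv j θ i :=
  (hasDerivAt_rotatedFrame j i θ).deriv

theorem rotatedFrameDeriv_zero_overlap (k : Fin 3) (θ : ℝ) :
    ∑ i, (starRingEnd ℂ) (rotatedFrameDeriv 0 θ i) * rotatedFrame k θ i = 0 := by
  simp [rotatedFrameDeriv]

theorem rotatedFrameDeriv_one_overlap_two (θ : ℝ) :
    ∑ i, (starRingEnd ℂ) (rotatedFrameDeriv 1 θ i) * rotatedFrame 2 θ i = 1 := by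
  simp only [rotatedFrameDeriv, rotatedFrame, Matrix.cons_val, Matrix.cons_val_zero,
    Matrix.cons_val_one, Fin.sum_univ_three, map_zero, zero_mul, map_neg, conj_ofReal,
    neg_mul_neg, zero_add]
  exact_mod_cast by simpa [sq] using Real.sin_sq_add_cos_sq θ

theorem quantumInfoCL_rotatedFrame (e : Fin 3 → ℝ) (θ : ℝ) :
    quantumInfoCL rotatedFrame e θ = 4 * (e 1 + e 2) := by
  simp [quantumInfoCL_eq_overlap_sum, Fin.sum_sum_ite_lt_three, deriv_rotatedFrame,
    rotatedFrameDeriv_zero_overlap, rotatedFrameDeriv_one_overlap_two]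

theorem CL_not_monotone_depolarizing_general (ε r : ℝ)
    (hε : ε < 1 / 3) (hr : r < 1)
    (p q : Fin 3 → ℝ)
    (hp : p = ![1 - 2 * ε, ε, ε])
    (hq : q = ![r * (1 - 2 * ε) + (1 - r) / 3, r * ε + (1 - r) / 3, r * ε + (1 - r) / 3])
    (v : Fin 3 → ℝ → Fin 3 → ℂ)
    (hv : ∀ θ : ℝ, v 0 θ = ![1, 0, 0] ∧
      v 1 θ = ![0, (Real.cos θ : ℂ), (Real.sin θ : ℂ)] ∧
      v 2 θ = ![0, (-(Real.sin θ) : ℂ), (Real.cos θ : ℂ)]) :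
    ∀ θ : ℝ,
      let CL : (Fin 3 → ℝ) → ℝ := fun e =>
        (∑ i, (deriv (fun _ : ℝ => e i) θ) ^ 2 / e i)
          + 4 * ∑ j, ∑ k, (if j < k then (e j + e k) *
              ‖∑ i, (starRingEnd ℂ) (deriv (fun t => v j t i) θ) * v k θ i‖ ^ 2
            else 0)
      CL q - CL p = (1 - r) * (8 / 3 - 8 * ε) ∧ 0 < CL q - CL p := by
  intro θ _
  have hv_eq : v = rotatedFrame := funext fun j => funext fun t => by
    fin_cases j <;> simp [rotatedFrame, hv t]
  have hdiff : quantumInfoCL v q θ - quantumInfoCL v p θ = (1 - r) * (8 / 3 - 8 * ε) := by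
    simp only [hv_eq, quantumInfoCL_rotatedFrame, hp, hq, Matrix.cons_val_one, Matrix.cons_val]
    ring
  exact ⟨hdiff, hdiff ▸ mul_pos (by linarith) (by linarith)⟩

/-- For `0 < ε < 1/3` and `0 ≤ r < 1`, applying the depolarizing channel
`E(ρ) = rρ + ((1−r)/3)I` to the rotation family (eigenvalues `(1−2ε,ε,ε)` mapped to
`(r(1−2ε)+(1−r)/3, rε+(1−r)/3, rε+(1−r)/3)`, eigenvectors unchanged) increases the
`C_L` quantum information: `C_L(E(ρ(θ))) − C_L(ρ(θ)) = (1−r)(8/3 − 8ε) > 0`, so `C_L`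
is not monotone under TP-CP maps. -/
theorem CL_not_monotone_depolarizing (ε r : ℝ)
    (hε0 : 0 < ε) (hε : ε < 1 / 3) (hr0 : 0 ≤ r) (hr : r < 1)
    (p q : Fin 3 → ℝ)
    (hp : p = ![1 - 2 * ε, ε, ε])
    (hq : q = ![r * (1 - 2 * ε) + (1 - r) / 3, r * ε + (1 - r) / 3, r * ε + (1 - r) / 3])
    (v : Fin 3 → ℝ → Fin 3 → ℂ)
    (hv : ∀ θ : ℝ, v 0 θ = ![1, 0, 0] ∧
      v 1 θ = ![0, (Real.cos θ : ℂ), (Real.sin θ : ℂ)] ∧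
      v 2 θ = ![0, (-(Real.sin θ) : ℂ), (Real.cos θ : ℂ)]) :
    ∀ θ : ℝ,
      let CL : (Fin 3 → ℝ) → ℝ := fun e =>
        (∑ i, (deriv (fun _ : ℝ => e i) θ) ^ 2 / e i)
          + 4 * ∑ j, ∑ k, (if j < k then (e j + e k) *
              ‖∑ i, (starRingEnd ℂ) (deriv (fun t => v j t i) θ) * v k θ i‖ ^ 2
            else 0)
      CL q - CL p = (1 - r) * (8 / 3 - 8 * ε) ∧ 0 < CL q - CL p :=
  CL_not_monotone_depolarizing_general ε r hε hr p q hp hq v hv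
end

section
/- For the one-parameter family of density matrices ρ(θ) = Σ_i p_i(θ)|w_i(θ)⟩⟨w_i(θ)| with unit eigenvectors, the C_L quantum information decomposes as C_L(θ) = Σ_i (p_i'(θ))^2/p_i(θ) + Σ_i p_i(θ) H_{SLD}(ρ_i(θ)), where H_{SLD}(ρ_i(θ)) = 4(⟨w_i'|w_i'⟩ − |⟨w_i'|w_i⟩|^2) is the SLD quantum information of the pure state ρ_i(θ) = |w_i(θ)⟩⟨w_i(θ)|. -/
/-!
Differentiating `⟪w_j, w_k⟫ = δ_jk` gives `⟪w_j', w_k⟫ = -conj ⟪w_k', w_j⟫`, so the weights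
`|⟪w_j', w_k⟫|²` are symmetric in `j, k` and the sum over pairs `j < k` of `(p_j + p_k) |⟪w_j', w_k⟫|²`
becomes `∑_j p_j ∑_{k ≠ j} |⟪w_j', w_k⟫|²`. Since the `w_k` form an orthonormal basis, Parseval turns
`∑_k |⟪w_j', w_k⟫|²` into `⟪w_j', w_j'⟫`, and removing the term `k = j` leaves the pure-state SLD
information of `w_j`.
-/

open Finset
open scoped InnerProductSpace ComplexConjugate

theorem Finset.sum_sum_ite_lt_add_mul_of_symm {ι R : Type*} [Fintype ι] [LinearOrder ι]
    [CommRing R] (p : ι → R) {a : ι → ι → R} (ha : ∀ j k, a j k = a k j) :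
    ∑ j, ∑ k, (if j < k then (p j + p k) * a j k else 0) = ∑ j, p j * (∑ k, a j k - a j j) := by
  have hsplit : ∀ j k, (if j < k then (p j + p k) * a j k else 0)
      = (if j < k then p j * a j k else 0) + (if j < k then p k * a j k else 0) := by
    intro j k
    split_ifs <;> ring
  have hswap : ∑ j, ∑ k, (if j < k then p k * a j k else 0)
      = ∑ j, ∑ k, (if k < j then p j * a j k else 0) := by
    rw [sum_comm]
    simp_rw [ha]
  have htrichotomy : ∀ j k, (if j < k then p j * a j k else 0) + (if k < j then p j * a j k else 0)
      = p j * a j k - if j = k then p j * a j k else 0 := by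
    intro j k
    rcases lt_trichotomy j k with h | rfl | h
    · simp [h, h.ne, h.not_gt]
    · simp
    · simp [h, h.ne', h.not_gt]
  simp_rw [hsplit, sum_add_distrib, hswap, ← sum_add_distrib, htrichotomy, sum_sub_distrib,
    sum_ite_eq, mem_univ, if_true, mul_sub, mul_sum]
  rw [sum_sub_distrib]

section

variable {𝕜 E ι : Type*} [RCLike 𝕜] [NormedAddCommGroup E] [InnerProductSpace 𝕜 E]

theorem Orthonormal.sum_sq_norm_inner_left_of_card_eq_finrank [Fintype ι] [FiniteDimensional 𝕜 E]
    {v : ι → E} (hv : Orthonormal 𝕜 v) (hcard : Fintype.card ι = Module.finrank 𝕜 E) (x : E) :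
    ∑ i, ‖⟪x, v i⟫_𝕜‖ ^ 2 = ‖x‖ ^ 2 := by
  simpa using (OrthonormalBasis.mk hv
    (hv.linearIndependent.span_eq_top_of_card_eq_finrank' hcard).ge).sum_sq_norm_inner_left x

variable [NormedSpace ℝ E] {v : ι → ℝ → E} {θ : ℝ} {j k : ι}

theorem inner_deriv_eq_neg_conj_of_orthonormal (hv : ∀ t, Orthonormal 𝕜 fun i => v i t)
    (hj : DifferentiableAt ℝ (v j) θ) (hk : DifferentiableAt ℝ (v k) θ) :
    ⟪deriv (v j) θ, v k θ⟫_𝕜 = -conj ⟪deriv (v k) θ, v j θ⟫_𝕜 := by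
  classical
  have hconst : (fun t => ⟪v j t, v k t⟫_𝕜) = fun _ => if j = k then 1 else 0 :=
    funext fun t => orthonormal_iff_ite.mp (hv t) j k
  have hderiv := hj.hasDerivAt.inner 𝕜 hk.hasDerivAt
  rw [hconst] at hderiv
  have hsum : ⟪v j θ, deriv (v k) θ⟫_𝕜 + ⟪deriv (v j) θ, v k θ⟫_𝕜 = 0 :=
    hderiv.unique (hasDerivAt_const θ _)
  rw [← inner_conj_symm] at hsum
  linear_combination hsum

theorem norm_inner_deriv_comm_of_orthonormal (hv : ∀ t, Orthonormal 𝕜 fun i => v i t)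
    (hj : DifferentiableAt ℝ (v j) θ) (hk : DifferentiableAt ℝ (v k) θ) :
    ‖⟪deriv (v j) θ, v k θ⟫_𝕜‖ = ‖⟪deriv (v k) θ, v j θ⟫_𝕜‖ := by
  rw [inner_deriv_eq_neg_conj_of_orthonormal hv hj hk, norm_neg, RCLike.norm_conj]

end

theorem CL_decomposition_general
    {d : ℕ} (p : Fin d → ℝ → ℝ) (w : Fin d → ℝ → EuclideanSpace ℂ (Fin d)) (θ : ℝ)
    (hwd : ∀ i, Differentiable ℝ (w i))
    (hON : ∀ t : ℝ, Orthonormal ℂ (fun i => w i t)) :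
    (∑ i, (deriv (p i) θ) ^ 2 / p i θ)
      + 4 * ∑ j, ∑ k, (if j < k then (p j θ + p k θ) *
          ‖(inner ℂ (deriv (w j) θ) (w k θ) : ℂ)‖ ^ 2 else 0)
    = (∑ i, (deriv (p i) θ) ^ 2 / p i θ)
      + ∑ i, p i θ * (4 * ((inner ℂ (deriv (w i) θ) (deriv (w i) θ) : ℂ).re
          - ‖(inner ℂ (deriv (w i) θ) (w i θ) : ℂ)‖ ^ 2)) := by
  set a : Fin d → Fin d → ℝ := fun j k => ‖⟪deriv (w j) θ, w k θ⟫_ℂ‖ ^ 2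
  have hsymm : ∀ j k, a j k = a k j := fun j k => by
    simp only [a, norm_inner_deriv_comm_of_orthonormal hON (hwd j θ) (hwd k θ)]
  have hparseval : ∀ i, (⟪deriv (w i) θ, deriv (w i) θ⟫_ℂ).re = ∑ k, a i k := fun i => by
    rw [(hON θ).sum_sq_norm_inner_left_of_card_eq_finrank (by simp) (deriv (w i) θ)]
    exact inner_self_eq_norm_sq (𝕜 := ℂ) _
  rw [sum_sum_ite_lt_add_mul_of_symm (fun i => p i θ) hsymm, mul_sum]
  congr 1
  refine sum_congr rfl fun i _ => ?_
  rw [hparseval]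
  ring

/-- `C_L` decomposes as the classical Fisher information of the eigenvalues plus the
`p_i`-weighted sum of the pure-state SLD informations
`H_{SLD}(ρ_i(θ)) = 4(⟨w_i'|w_i'⟩ − |⟨w_i'|w_i⟩|²)`. -/
theorem CL_decomposition
    {d : ℕ} (p : Fin d → ℝ → ℝ) (w : Fin d → ℝ → EuclideanSpace ℂ (Fin d)) (θ : ℝ)
    (hp : ∀ i, 0 < p i θ)
    (hpd : ∀ i, Differentiable ℝ (p i))
    (hwd : ∀ i, Differentiable ℝ (w i))
    (hON : ∀ t : ℝ, Orthonormal ℂ (fun i => w i t)) :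
    (∑ i, (deriv (p i) θ) ^ 2 / p i θ)
      + 4 * ∑ j, ∑ k, (if j < k then (p j θ + p k θ) *
          ‖(inner ℂ (deriv (w j) θ) (w k θ) : ℂ)‖ ^ 2 else 0)
    = (∑ i, (deriv (p i) θ) ^ 2 / p i θ)
      + ∑ i, p i θ * (4 * ((inner ℂ (deriv (w i) θ) (deriv (w i) θ) : ℂ).re
          - ‖(inner ℂ (deriv (w i) θ) (w i θ) : ℂ)‖ ^ 2)) :=
  CL_decomposition_general p w θ hwd hON
end

section
/- Consider the two-parameter family of eigenvectors |v_1(θ,φ)⟩ = (cos(θ/2) e^{−iφ/2}, sin(θ/2) e^{iφ/2})^T and |v_2(θ,φ)⟩ = (sin(θ/2) e^{−iφ/2}, −cos(θ/2) e^{iφ/2})^T. Then ⟨∂v_1/∂θ | ∂v_1/∂φ⟩ = (i/2) sin(θ/2) cos(θ/2) and ⟨∂v_2/∂θ | ∂v_2/∂φ⟩ = (−i/2) sin(θ/2) cos(θ/2); in particular these inner products are not real for θ not a multiple of π. -/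
/-!
Each eigenvector has the form `(a(θ) e^{-iφ/2}, b(θ) e^{iφ/2})` with real amplitudes `a`, `b`.
Since the phases have modulus one, `⟨∂_θ v | ∂_φ v⟩ = (i/2)(b b' - a a')` is purely imaginary;
for `v₁` and `v₂` it equals `±(i/4) sin θ`, which vanishes only when `θ ∈ πℤ`.
-/

open Complex ComplexConjugate

noncomputable def phaseVector {ι : Type*} (a : ι → ℝ → ℝ) (α : ι → ℝ) : ℝ → ℝ → ι → ℂ :=
  fun t s i => (a i t : ℂ) * exp ((α i * s : ℝ) * I)

section phaseVector

variable {ι : Type*} (a : ι → ℝ → ℝ) (α : ι → ℝ)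

lemma hasDerivAt_phaseVector_fst {a' : ι → ℝ} {θ : ℝ} (s : ℝ) (i : ι)
    (ha : HasDerivAt (a i) (a' i) θ) :
    HasDerivAt (fun t => phaseVector a α t s i) (a' i * exp ((α i * s : ℝ) * I)) θ :=
  ha.ofReal_comp.mul_const _

lemma hasDerivAt_phaseVector_snd (θ φ : ℝ) (i : ι) :
    HasDerivAt (fun s => phaseVector a α θ s i)
      (a i θ * (α i * I * exp ((α i * φ : ℝ) * I))) φ :=
  ((((hasDerivAt_id φ).const_mul (α i)).ofReal_comp.mul_const I).cexp.const_mul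
    (a i θ : ℂ)).congr_deriv (by simp only [id, mul_one]; ring)

theorem sum_conj_deriv_mul_deriv_phaseVector [Fintype ι] {a' : ι → ℝ} {θ : ℝ} (φ : ℝ)
    (ha : ∀ i, HasDerivAt (a i) (a' i) θ) :
    ∑ i, conj (deriv (fun t => phaseVector a α t φ i) θ) * deriv (fun s => phaseVector a α θ s i) φ
      = I * ∑ i, (α i * a i θ * a' i : ℝ) := by
  push_cast
  rw [Finset.mul_sum]
  refine Finset.sum_congr rfl fun i _ => ?_
  rw [(hasDerivAt_phaseVector_fst a α φ i (ha i)).deriv,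
    (hasDerivAt_phaseVector_snd a α θ φ i).deriv]
  have hunit : conj (exp ((α i * φ : ℝ) * I)) * exp ((α i * φ : ℝ) * I) = 1 := by
    rw [conj_mul', norm_exp_ofReal_mul_I, ofReal_one, one_pow]
  simp only [map_mul, conj_ofReal]
  linear_combination (a' i * a i θ * α i * I : ℂ) * hunit

end phaseVector

theorem sum_conj_deriv_mul_deriv_of_half_phases {v : ℝ → ℝ → Fin 2 → ℂ} {a b : ℝ → ℝ}
    {a' b' θ : ℝ} (ha : HasDerivAt a a' θ) (hb : HasDerivAt b b' θ) (φ : ℝ)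
    (hv : ∀ t s : ℝ, v t s = ![(a t : ℂ) * exp (-I * s / 2), (b t : ℂ) * exp (I * s / 2)]) :
    ∑ i, conj (deriv (fun t => v t φ i) θ) * deriv (fun s => v θ s i) φ
      = I / 2 * (b θ * b' - a θ * a' : ℝ) := by
  have hw : v = phaseVector ![a, b] ![-1 / 2, 1 / 2] := by
    funext t s i
    rw [hv]
    fin_cases i <;> simp only [phaseVector, Fin.zero_eta, Fin.mk_one, Matrix.cons_val_zero,
      Matrix.cons_val_one] <;> push_cast <;> ring_nf
  rw [hw, sum_conj_deriv_mul_deriv_phaseVector (a' := ![a', b']) _ _ φ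
    (Fin.forall_fin_two.2 ⟨ha, hb⟩)]
  simp only [Fin.sum_univ_two, Matrix.cons_val_zero, Matrix.cons_val_one]
  push_cast
  ring

lemma hasDerivAt_cos_half (θ : ℝ) :
    HasDerivAt (fun t => Real.cos (t / 2)) (-Real.sin (θ / 2) / 2) θ := by
  simpa [div_eq_mul_inv] using ((hasDerivAt_id θ).div_const 2).cos

lemma hasDerivAt_sin_half (θ : ℝ) :
    HasDerivAt (fun t => Real.sin (t / 2)) (Real.cos (θ / 2) / 2) θ := by
  simpa [div_eq_mul_inv] using ((hasDerivAt_id θ).div_const 2).sin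

lemma sin_half_mul_cos_half_ne_zero {θ : ℝ} (hθ : ¬∃ n : ℤ, θ = n * Real.pi) :
    Real.sin (θ / 2) * Real.cos (θ / 2) ≠ 0 := by
  intro h
  have hsin : Real.sin θ = 0 := by
    rw [← mul_div_cancel₀ θ two_ne_zero, Real.sin_two_mul, mul_assoc, h, mul_zero]
  obtain ⟨n, hn⟩ := Real.sin_eq_zero_iff.mp hsin
  exact hθ ⟨n, hn.symm⟩

/-- For the Bloch eigenvectors `|v₁(θ,φ)⟩ = (cos(θ/2)e^{−iφ/2}, sin(θ/2)e^{iφ/2})ᵀ` and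
`|v₂(θ,φ)⟩ = (sin(θ/2)e^{−iφ/2}, −cos(θ/2)e^{iφ/2})ᵀ`,
`⟨∂_θ v₁|∂_φ v₁⟩ = (i/2)sin(θ/2)cos(θ/2)` and `⟨∂_θ v₂|∂_φ v₂⟩ = (−i/2)sin(θ/2)cos(θ/2)`;
these are not real unless `θ` is a multiple of `π`. -/
theorem bloch_eigenvector_mixed_partials
    (v₁ v₂ : ℝ → ℝ → Fin 2 → ℂ)
    (hv₁ : ∀ θ φ : ℝ, v₁ θ φ =
      ![(Real.cos (θ / 2) : ℂ) * Complex.exp (-Complex.I * (φ : ℂ) / 2),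
        (Real.sin (θ / 2) : ℂ) * Complex.exp (Complex.I * (φ : ℂ) / 2)])
    (hv₂ : ∀ θ φ : ℝ, v₂ θ φ =
      ![(Real.sin (θ / 2) : ℂ) * Complex.exp (-Complex.I * (φ : ℂ) / 2),
        -(Real.cos (θ / 2) : ℂ) * Complex.exp (Complex.I * (φ : ℂ) / 2)]) :
    ∀ θ φ : ℝ,
      (∑ i, (starRingEnd ℂ) (deriv (fun t => v₁ t φ i) θ) * deriv (fun s => v₁ θ s i) φ
        = (Complex.I / 2) * (Real.sin (θ / 2) : ℂ) * (Real.cos (θ / 2) : ℂ)) ∧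
      (∑ i, (starRingEnd ℂ) (deriv (fun t => v₂ t φ i) θ) * deriv (fun s => v₂ θ s i) φ
        = (-Complex.I / 2) * (Real.sin (θ / 2) : ℂ) * (Real.cos (θ / 2) : ℂ)) ∧
      ((¬ ∃ n : ℤ, θ = n * Real.pi) →
        (∑ i, (starRingEnd ℂ) (deriv (fun t => v₁ t φ i) θ)
            * deriv (fun s => v₁ θ s i) φ).im ≠ 0) := by
  intro θ φ
  have key₁ := sum_conj_deriv_mul_deriv_of_half_phases (hasDerivAt_cos_half θ)
    (hasDerivAt_sin_half θ) φ hv₁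
  have key₂ := sum_conj_deriv_mul_deriv_of_half_phases (hasDerivAt_sin_half θ)
    (hasDerivAt_cos_half θ).neg φ (v := v₂) (b := fun t => -Real.cos (t / 2))
    fun t s => by rw [hv₂, ofReal_neg]
  have hval₁ : ∑ i, conj (deriv (fun t => v₁ t φ i) θ) * deriv (fun s => v₁ θ s i) φ
      = ((Real.sin (θ / 2) * Real.cos (θ / 2) / 2 : ℝ) : ℂ) * I := by
    rw [key₁]; push_cast; ring
  refine ⟨by rw [hval₁]; push_cast; ring, by rw [key₂]; push_cast; ring, fun hθ => ?_⟩
  rw [hval₁, mul_I_im, ofReal_re]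
  exact div_ne_zero (sin_half_mul_cos_half_ne_zero hθ) two_ne_zero
end

section
/- For the family of qubit states ρ(r,θ,φ) = ½(I + r(sinθ cosφ, sinθ sinφ, cosθ)·σ) with 0 < r < 1, the Sarovar–Milburn quantum information computed from the eigenvectors |v_1⟩ = (cos(θ/2)e^{−iφ/2}, sin(θ/2)e^{iφ/2})^T, |v_2⟩ = (sin(θ/2)e^{−iφ/2}, −cos(θ/2)e^{iφ/2})^T in parameters (r,θ,φ) is the diagonal matrix diag(1/(1−r²), 1, 1), while computed from the phase-shifted eigenvectors e^{−iφ/2}|v_k⟩ it is diag(1/(1−r²), 1, 2+2r cosθ). Hence C_Υ depends on the choice of eigenvector phases. -/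
/-!
The information matrix splits into the classical Fisher information of the eigenvalues
`(1 ± r)/2`, which contributes `1/(1 - r²)` in the `r`-direction only, and terms built from the
overlaps `⟨∂u_i|u_j⟩`. All eigenvectors considered have components `c_a(θ) e^{i m_a φ/2}` with
the same exponents `m` for both vectors, so in each overlap the phases cancel and only
`c`, `c'` and `m` remain. Multiplying the eigenvectors by `e^{-igφ/2}` shifts every `m_a` by `-g`:
by orthogonality `⟨∂u_0|u_1⟩` is unchanged, while the diagonal overlaps become
`⟨∂_φ u_i|u_i⟩ = (i/2)(g ± cos θ)`. The `φφ` entry is then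
`sin²θ + p_0 (cos θ + g)² + p_1 (g - cos θ)² = 1 + g² + 2 g r cos θ`;
the two bases of the theorem are `g = 0` and `g = 1`.
-/

open Complex ComplexConjugate

theorem HasDerivAt.hasFDerivAt_comp_apply {E P : Type*} [NormedAddCommGroup E]
    [NormedSpace ℝ E] [Fintype P] {f : ℝ → E} {f' : E} {x : P → ℝ} {i : P}
    (hf : HasDerivAt f f' (x i)) :
    HasFDerivAt (fun y : P → ℝ => f (y i))
      ((ContinuousLinearMap.proj i : (P → ℝ) →L[ℝ] ℝ).smulRight f') x := by
  exact hf.hasFDerivAt.comp x (hasFDerivAt_apply (𝕜 := ℝ) (F' := fun _ : P => ℝ) i x)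

theorem fderiv_mul_comp_apply {P : Type*} [Fintype P] {A B : ℝ → ℂ} {A' B' : ℂ} {x : P → ℝ}
    {i j : P} (hA : HasDerivAt A A' (x i)) (hB : HasDerivAt B B' (x j)) (v : P → ℝ) :
    fderiv ℝ (fun y => A (y i) * B (y j)) x v = v i * A' * B (x j) + A (x i) * (v j * B') := by
  rw [HasFDerivAt.fderiv (f := fun y : P → ℝ => A (y i) * B (y j))
    (hA.hasFDerivAt_comp_apply.mul hB.hasFDerivAt_comp_apply)]
  simp only [add_apply, smul_apply, ContinuousLinearMap.smulRight_apply,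
    ContinuousLinearMap.proj_apply, Complex.real_smul, smul_eq_mul]
  ring

/-- The parameters are `y = (r, θ, φ)`; component `a` is `c_a(θ) e^{i m_a φ/2}`. -/
noncomputable def phaseSpinor {κ : Type*} (c : κ → ℝ → ℝ) (m : κ → ℝ) (y : Fin 3 → ℝ)
    (a : κ) : ℂ :=
  c a (y 1) * cexp (I * m a * y 2 / 2)

theorem fderiv_phaseSpinor {κ : Type*} {c c' : κ → ℝ → ℝ} (m : κ → ℝ) {x : Fin 3 → ℝ}
    (hc : ∀ a, HasDerivAt (c a) (c' a (x 1)) (x 1)) (v : Fin 3 → ℝ) (a : κ) :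
    fderiv ℝ (fun y => phaseSpinor c m y a) x v
      = (v 1 * c' a (x 1) + I * m a * v 2 / 2 * c a (x 1)) * cexp (I * m a * x 2 / 2) := by
  have hE : HasDerivAt (fun t : ℝ => cexp (I * m a * t / 2))
      (cexp (I * m a * x 2 / 2) * (I * m a / 2)) (x 2) := by
    simpa using (((hasDerivAt_id (x 2)).ofReal_comp.const_mul (I * m a)).div_const 2).cexp
  unfold phaseSpinor
  rw [fderiv_mul_comp_apply (hc a).ofReal_comp hE]
  ring

/-- `derivOverlap u x v i j = ⟨∂_v u_i | u_j⟩`. -/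
noncomputable def derivOverlap {ι κ P : Type*} [Fintype κ] [Fintype P]
    (u : ι → (P → ℝ) → κ → ℂ) (x v : P → ℝ) (i j : ι) : ℂ :=
  ∑ a, conj (fderiv ℝ (fun y => u i y a) x v) * u j x a

theorem derivOverlap_phaseSpinor {ι κ : Type*} [Fintype κ] {c c' : ι → κ → ℝ → ℝ}
    (m : κ → ℝ) {x : Fin 3 → ℝ} (hc : ∀ i a, HasDerivAt (c i a) (c' i a (x 1)) (x 1))
    (v : Fin 3 → ℝ) (i j : ι) :
    derivOverlap (fun i => phaseSpinor (c i) m) x v i j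
      = ↑(v 1 * ∑ a, c' i a (x 1) * c j a (x 1))
        - ↑(v 2 / 2 * ∑ a, m a * c i a (x 1) * c j a (x 1)) * I := by
  have hphase : ∀ a, conj (cexp (I * m a * x 2 / 2)) * cexp (I * m a * x 2 / 2) = 1 := by
    intro a
    rw [← Complex.exp_conj, ← Complex.exp_add, ← Complex.exp_zero]
    congr 1
    simp only [map_div₀, map_mul, Complex.conj_I, Complex.conj_ofReal, map_ofNat]
    ring
  simp only [derivOverlap, fderiv_phaseSpinor m (hc i)]
  unfold phaseSpinor
  push_cast
  rw [Finset.mul_sum, Finset.mul_sum, Finset.sum_mul, ← Finset.sum_sub_distrib]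
  refine Finset.sum_congr rfl fun a _ => ?_
  simp only [map_mul, map_add, map_div₀, Complex.conj_ofReal, Complex.conj_I, map_ofNat]
  linear_combination
    ((v 1 * c' i a (x 1) - I * m a * v 2 / 2 * c i a (x 1)) * c j a (x 1) : ℂ) * hphase a

noncomputable def classicalFisher {ι P : Type*} [Fintype ι] [Fintype P] (p : ι → (P → ℝ) → ℝ)
    (x v w : P → ℝ) : ℝ :=
  ∑ i, fderiv ℝ (p i) x v * fderiv ℝ (p i) x w / p i x

/-- The Sarovar–Milburn information `C_Υ` of eigenvalues `p` and eigenvectors `u`. -/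
noncomputable def smInformation {ι κ P : Type*} [Fintype ι] [LT ι] [DecidableLT ι]
    [Fintype κ] [Fintype P] [DecidableEq P] (p : ι → (P → ℝ) → ℝ) (u : ι → (P → ℝ) → κ → ℂ)
    (x : P → ℝ) (k l : P) : ℝ :=
  classicalFisher p x (Pi.single k 1) (Pi.single l 1)
  + 4 * (∑ i, ∑ j, if i < j then (p i x + p j x) *
        ((∑ a, conj (fderiv ℝ (fun y => u i y a) x (Pi.single k 1)) * u j x a)
          * (∑ a, conj (u j x a) * fderiv ℝ (fun y => u i y a) x (Pi.single l 1))) else 0).re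
  + 4 * (∑ i, (p i x : ℂ) *
        ((∑ a, conj (fderiv ℝ (fun y => u i y a) x (Pi.single k 1)) * u i x a)
          * (∑ a, conj (u i x a) * fderiv ℝ (fun y => u i y a) x (Pi.single l 1)))).re

theorem smInformation_fin_two {κ P : Type*} [Fintype κ] [Fintype P] [DecidableEq P]
    (p : Fin 2 → (P → ℝ) → ℝ) (u : Fin 2 → (P → ℝ) → κ → ℂ) (x : P → ℝ) (k l : P) :
    smInformation p u x k l =
      classicalFisher p x (Pi.single k 1) (Pi.single l 1)
      + 4 * (p 0 x + p 1 x) * (derivOverlap u x (Pi.single k 1) 0 1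
          * conj (derivOverlap u x (Pi.single l 1) 0 1)).re
      + 4 * ∑ i, p i x * (derivOverlap u x (Pi.single k 1) i i
          * conj (derivOverlap u x (Pi.single l 1) i i)).re := by
  have hfold : ∀ v i j, ∑ a, conj (fderiv ℝ (fun y => u i y a) x v) * u j x a
      = derivOverlap u x v i j := fun _ _ _ => rfl
  have hswap : ∀ v i j, ∑ a, conj (u j x a) * fderiv ℝ (fun y => u i y a) x v
      = conj (derivOverlap u x v i j) := by
    intro v i j
    simp [derivOverlap, map_sum, mul_comm]
  simp only [smInformation, hfold, hswap]
  simp [Fin.sum_univ_two, mul_assoc]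

theorem classicalFisher_bloch {p : Fin 2 → (Fin 3 → ℝ) → ℝ}
    (hp : ∀ y, p 0 y = (1 + y 0) / 2 ∧ p 1 y = (1 - y 0) / 2) {x : Fin 3 → ℝ}
    (hr₁ : -1 < x 0) (hr₂ : x 0 < 1) (v w : Fin 3 → ℝ) :
    classicalFisher p x v w = v 0 * w 0 / (1 - x 0 ^ 2) := by
  have hd₀ : ∀ v, fderiv ℝ (p 0) x v = v 0 / 2 := fun v => by
    rw [show p 0 = fun y => (1 + y 0) / 2 from funext fun y => (hp y).1,
      (((hasDerivAt_id' (x 0)).const_add 1).div_const 2).hasFDerivAt_comp_apply.fderiv]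
    simp only [ContinuousLinearMap.smulRight_apply, ContinuousLinearMap.proj_apply, smul_eq_mul]
    ring
  have hd₁ : ∀ v, fderiv ℝ (p 1) x v = -(v 0 / 2) := fun v => by
    rw [show p 1 = fun y => (1 - y 0) / 2 from funext fun y => (hp y).2,
      (((hasDerivAt_id' (x 0)).const_sub 1).div_const 2).hasFDerivAt_comp_apply.fderiv]
    simp only [ContinuousLinearMap.smulRight_apply, ContinuousLinearMap.proj_apply, smul_eq_mul]
    ring
  have h₁ : 1 + x 0 ≠ 0 := by linarith
  have h₂ : 1 - x 0 ≠ 0 := by linarith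
  have h₃ : 1 - x 0 ^ 2 ≠ 0 := by nlinarith
  rw [classicalFisher, Fin.sum_univ_two, hd₀, hd₀, hd₁, hd₁, (hp x).1, (hp x).2]
  field_simp
  ring

noncomputable def blochAmplitude : Fin 2 → Fin 2 → ℝ → ℝ :=
  ![![fun t => Real.cos (t / 2), fun t => Real.sin (t / 2)],
    ![fun t => Real.sin (t / 2), fun t => -Real.cos (t / 2)]]

noncomputable def blochAmplitudeDeriv : Fin 2 → Fin 2 → ℝ → ℝ :=
  ![![fun t => -Real.sin (t / 2) / 2, fun t => Real.cos (t / 2) / 2],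
    ![fun t => Real.cos (t / 2) / 2, fun t => Real.sin (t / 2) / 2]]

theorem hasDerivAt_blochAmplitude (i a : Fin 2) (t : ℝ) :
    HasDerivAt (blochAmplitude i a) (blochAmplitudeDeriv i a t) t := by
  have hhalf : HasDerivAt (fun s : ℝ => s / 2) (1 / 2) t := (hasDerivAt_id' t).div_const 2
  have hcos := (Real.hasDerivAt_cos (t / 2)).comp t hhalf
  have hsin := (Real.hasDerivAt_sin (t / 2)).comp t hhalf
  fin_cases i <;> fin_cases a <;>
    simp only [blochAmplitude, blochAmplitudeDeriv, Fin.zero_eta, Fin.mk_one,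
      Matrix.cons_val_zero, Matrix.cons_val_one, Matrix.cons_val_fin_one]
  · exact hcos.congr_deriv (by ring)
  · exact hsin.congr_deriv (by ring)
  · exact hsin.congr_deriv (by ring)
  · exact hcos.neg.congr_deriv (by ring)

/-- `gaugedBlochEigvec 0` is the basis `|v₁⟩, |v₂⟩` of the paper and
`gaugedBlochEigvec g = e^{-igφ/2} · gaugedBlochEigvec 0` (`gaugedBlochEigvec_eq_exp_mul`). -/
noncomputable def gaugedBlochEigvec (g : ℝ) : Fin 2 → (Fin 3 → ℝ) → Fin 2 → ℂ :=
  fun i => phaseSpinor (blochAmplitude i) ![-1 - g, 1 - g]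

theorem gaugedBlochEigvec_eq_exp_mul (g : ℝ) (i : Fin 2) (y : Fin 3 → ℝ) :
    gaugedBlochEigvec g i y = fun a => cexp (-I * g * y 2 / 2) * gaugedBlochEigvec 0 i y a := by
  funext a
  simp only [gaugedBlochEigvec, phaseSpinor]
  rw [mul_left_comm, ← Complex.exp_add]
  congr 2
  fin_cases a <;>
    simp only [Fin.zero_eta, Fin.mk_one, Matrix.cons_val_zero, Matrix.cons_val_one,
      Matrix.cons_val_fin_one] <;> push_cast <;> ring

section derivOverlap_gaugedBlochEigvec

variable (g : ℝ) (x v : Fin 3 → ℝ)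

theorem derivOverlap_gaugedBlochEigvec_zero_one :
    derivOverlap (gaugedBlochEigvec g) x v 0 1
      = ↑(-(v 1) / 2) + ↑(v 2 * Real.sin (x 1) / 2) * I := by
  have hsin : Real.sin (x 1) = 2 * Real.sin (x 1 / 2) * Real.cos (x 1 / 2) := by
    rw [← Real.sin_two_mul]; ring_nf
  unfold gaugedBlochEigvec
  rw [derivOverlap_phaseSpinor _ (fun i a => hasDerivAt_blochAmplitude i a _), hsin]
  simp only [Fin.sum_univ_two, blochAmplitude, blochAmplitudeDeriv, Matrix.cons_val_zero,
    Matrix.cons_val_one]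
  linear_combination (norm := (push_cast; ring1))
    (-(v 1 : ℂ) / 2) * congrArg ofReal (Real.sin_sq_add_cos_sq (x 1 / 2))

theorem derivOverlap_gaugedBlochEigvec_zero_zero :
    derivOverlap (gaugedBlochEigvec g) x v 0 0 = ↑(v 2 * (Real.cos (x 1) + g) / 2) * I := by
  have hcos : Real.cos (x 1) = Real.cos (x 1 / 2) ^ 2 - Real.sin (x 1 / 2) ^ 2 := by
    rw [← Real.cos_two_mul']; ring_nf
  unfold gaugedBlochEigvec
  rw [derivOverlap_phaseSpinor _ (fun i a => hasDerivAt_blochAmplitude i a _), hcos]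
  simp only [Fin.sum_univ_two, blochAmplitude, blochAmplitudeDeriv, Matrix.cons_val_zero,
    Matrix.cons_val_one]
  linear_combination (norm := (push_cast; ring1))
    ((v 2 * g : ℂ) / 2 * I) * congrArg ofReal (Real.sin_sq_add_cos_sq (x 1 / 2))

theorem derivOverlap_gaugedBlochEigvec_one_one :
    derivOverlap (gaugedBlochEigvec g) x v 1 1 = ↑(v 2 * (g - Real.cos (x 1)) / 2) * I := by
  have hcos : Real.cos (x 1) = Real.cos (x 1 / 2) ^ 2 - Real.sin (x 1 / 2) ^ 2 := by
    rw [← Real.cos_two_mul']; ring_nf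
  unfold gaugedBlochEigvec
  rw [derivOverlap_phaseSpinor _ (fun i a => hasDerivAt_blochAmplitude i a _), hcos]
  simp only [Fin.sum_univ_two, blochAmplitude, blochAmplitudeDeriv, Matrix.cons_val_zero,
    Matrix.cons_val_one]
  linear_combination (norm := (push_cast; ring1))
    ((v 2 * g : ℂ) / 2 * I) * congrArg ofReal (Real.sin_sq_add_cos_sq (x 1 / 2))

end derivOverlap_gaugedBlochEigvec

theorem smInformation_gaugedBlochEigvec {p : Fin 2 → (Fin 3 → ℝ) → ℝ}
    (hp : ∀ y, p 0 y = (1 + y 0) / 2 ∧ p 1 y = (1 - y 0) / 2) (g : ℝ) {x : Fin 3 → ℝ}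
    (hr₁ : -1 < x 0) (hr₂ : x 0 < 1) (k l : Fin 3) :
    smInformation p (gaugedBlochEigvec g) x k l =
      ![![1 / (1 - x 0 ^ 2), 0, 0], ![0, 1, 0],
        ![0, 0, 1 + g ^ 2 + 2 * g * x 0 * Real.cos (x 1)]] k l := by
  simp only [smInformation_fin_two, classicalFisher_bloch hp hr₁ hr₂, Fin.sum_univ_two,
    derivOverlap_gaugedBlochEigvec_zero_one, derivOverlap_gaugedBlochEigvec_zero_zero,
    derivOverlap_gaugedBlochEigvec_one_one, (hp x).1, (hp x).2, Complex.add_re, Complex.add_im,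
    Complex.mul_re, Complex.mul_im, Complex.conj_re, Complex.conj_im, Complex.ofReal_re,
    Complex.ofReal_im, Complex.I_re, Complex.I_im]
  set v : Fin 3 → ℝ := Pi.single k 1
  set w : Fin 3 → ℝ := Pi.single l 1
  calc _ = v 0 * w 0 / (1 - x 0 ^ 2) + v 1 * w 1
        + v 2 * w 2 * (1 + g ^ 2 + 2 * g * x 0 * Real.cos (x 1)) := by
        linear_combination v 2 * w 2 * Real.sin_sq_add_cos_sq (x 1)
    _ = _ := by fin_cases k <;> fin_cases l <;> simp [v, w]

/-- For the Bloch family `ρ(r,θ,φ)` with eigenvalues `(1±r)/2`, the Sarovar–Milburn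
information matrix in parameters `(r,θ,φ)` is `diag(1/(1−r²),1,1)` for the eigenvectors
`|v₁⟩,|v₂⟩` and `diag(1/(1−r²),1,2+2r cos θ)` for the phase-shifted eigenvectors
`e^{−iφ/2}|v_k⟩`: `C_Υ` depends on the choice of eigenvector phases. -/
theorem SM_info_phase_dependent_qubit
    (p : Fin 2 → (Fin 3 → ℝ) → ℝ)
    (hp : ∀ x, p 0 x = (1 + x 0) / 2 ∧ p 1 x = (1 - x 0) / 2)
    (wA wB : Fin 2 → (Fin 3 → ℝ) → Fin 2 → ℂ)
    (hwA : ∀ x : Fin 3 → ℝ,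
      wA 0 x = ![(Real.cos (x 1 / 2) : ℂ) * Complex.exp (-Complex.I * (x 2 : ℂ) / 2),
                 (Real.sin (x 1 / 2) : ℂ) * Complex.exp (Complex.I * (x 2 : ℂ) / 2)] ∧
      wA 1 x = ![(Real.sin (x 1 / 2) : ℂ) * Complex.exp (-Complex.I * (x 2 : ℂ) / 2),
                 -(Real.cos (x 1 / 2) : ℂ) * Complex.exp (Complex.I * (x 2 : ℂ) / 2)])
    (hwB : ∀ (i : Fin 2) (x : Fin 3 → ℝ),
      wB i x = fun a => Complex.exp (-Complex.I * (x 2 : ℂ) / 2) * wA i x a) :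
    let pd : Fin 3 → ((Fin 3 → ℝ) → Fin 2 → ℂ) → (Fin 3 → ℝ) → Fin 2 → ℂ :=
      fun k f x a => fderiv ℝ (fun y => f y a) x (Pi.single k 1)
    let CU : (Fin 2 → (Fin 3 → ℝ) → Fin 2 → ℂ) → (Fin 3 → ℝ) → Fin 3 → Fin 3 → ℝ :=
      fun u x k l =>
        (∑ i, (fderiv ℝ (p i) x (Pi.single k 1)) * (fderiv ℝ (p i) x (Pi.single l 1))
            / p i x)
        + 4 * (∑ i, ∑ j, if i < j then (p i x + p j x) *
              ((∑ a, (starRingEnd ℂ) (pd k (u i) x a) * u j x a)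
                * (∑ a, (starRingEnd ℂ) (u j x a) * pd l (u i) x a)) else 0).re
        + 4 * (∑ i, (p i x : ℂ) *
              ((∑ a, (starRingEnd ℂ) (pd k (u i) x a) * u i x a)
                * (∑ a, (starRingEnd ℂ) (u i x a) * pd l (u i) x a))).re
    ∀ x : Fin 3 → ℝ, 0 < x 0 → x 0 < 1 →
      (∀ k l, CU wA x k l =
        ![![1 / (1 - (x 0) ^ 2), 0, 0], ![0, 1, 0], ![0, 0, 1]] k l) ∧
      (∀ k l, CU wB x k l =
        ![![1 / (1 - (x 0) ^ 2), 0, 0], ![0, 1, 0],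
          ![0, 0, 2 + 2 * x 0 * Real.cos (x 1)]] k l) := by
  intro pd CU x hr₀ hr₁
  have hA : wA = gaugedBlochEigvec 0 := by
    funext i y a
    fin_cases i <;> fin_cases a <;> simp [hwA, gaugedBlochEigvec, phaseSpinor, blochAmplitude]
  have hB : wB = gaugedBlochEigvec 1 := by
    funext i y
    rw [hwB, gaugedBlochEigvec_eq_exp_mul, hA]
    simp
  have hr : -1 < x 0 := by linarith
  refine ⟨fun k l => ?_, fun k l => ?_⟩
  · change smInformation p wA x k l = _
    rw [hA, smInformation_gaugedBlochEigvec hp 0 hr hr₁]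
    norm_num
  · change smInformation p wB x k l = _
    rw [hB, smInformation_gaugedBlochEigvec hp 1 hr hr₁]
    norm_num
end

section
/- Let ρ(θ) (θ ∈ ℝ^p) be a smooth multi-parameter family of density matrices with spectral decomposition ρ(θ) = Σ_k p_k(θ)|w_k(θ)⟩⟨w_k(θ)|, p_k > 0. Then the matrix C_Υ(θ) − C_L(θ), whose (m,n) entry is 4 Re Σ_i p_i ⟨w_i^{(m)}|w_i⟩⟨w_i|w_i^{(n)}⟩, is positive semidefinite; hence C_L(θ) ≤ C_Υ(θ) in the Loewner order. -/
/-!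
For real `v`, `vᵀ (C_Υ - C_L) v = 4 ∑ i, p i * |∑ m, v m * ⟨w_i^{(m)}|w_i⟩|²`: the matrix is four
times the real part of the weighted Gram matrix `Zᴴ * diagonal p * Z` with
`Z i m = ⟨w_i|w_i^{(m)}⟩`, and the real part of a positive semidefinite matrix is positive
semidefinite.
-/

namespace Matrix

open scoped ComplexOrder

variable {n 𝕜 : Type*} [Fintype n] [RCLike 𝕜]

theorem PosSemidef.map_re {A : Matrix n n 𝕜} (hA : A.PosSemidef) :
    (A.map RCLike.re).PosSemidef := by
  refine .of_dotProduct_mulVec_nonneg ?_ fun x ↦ ?_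
  · ext i j
    rw [conjTranspose_apply, map_apply, map_apply, star_trivial, ← hA.1.apply i j,
      RCLike.star_def, RCLike.conj_re]
  · have hquad : star x ⬝ᵥ (A.map RCLike.re *ᵥ x)
        = RCLike.re (star (fun i ↦ (x i : 𝕜)) ⬝ᵥ (A *ᵥ fun i ↦ (x i : 𝕜))) := by
      simp [dotProduct, mulVec, Finset.mul_sum, mul_left_comm]
    exact hquad ▸ hA.re_dotProduct_nonneg _

theorem posSemidef_sum_ofReal_mul_star_mul {ι : Type*} [Fintype ι] (c : ι → ℝ) (hc : 0 ≤ c)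
    (z : ι → n → 𝕜) :
    (of fun j k ↦ ∑ i, (c i : 𝕜) * (star (z i j) * z i k)).PosSemidef := by
  classical
  have hD : (diagonal fun i ↦ (c i : 𝕜)).PosSemidef :=
    .diagonal fun i ↦ by simpa using hc i
  convert hD.conjTranspose_mul_mul_same (of z) using 1
  ext j k
  simp [mul_apply, diagonal, mul_assoc, mul_left_comm]

end Matrix

theorem CUpsilon_sub_CL_posSemidef_multi_general
    {d q : ℕ} (p : Fin d → (Fin q → ℝ) → ℝ)
    (w : Fin d → (Fin q → ℝ) → EuclideanSpace ℂ (Fin d))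
    (hp : ∀ i x, 0 < p i x) :
    ∀ x : Fin q → ℝ,
      (Matrix.of (fun m n : Fin q =>
        4 * (∑ i, (p i x : ℂ) *
          ((inner ℂ (fderiv ℝ (w i) x (Pi.single m 1)) (w i x) : ℂ)
            * (inner ℂ (w i x) (fderiv ℝ (w i) x (Pi.single n 1)) : ℂ))).re)).PosSemidef := by
  intro x
  have hgram := Matrix.posSemidef_sum_ofReal_mul_star_mul (fun i ↦ p i x) (fun i ↦ (hp i x).le)
    fun i m ↦ inner ℂ (w i x) (fderiv ℝ (w i) x (Pi.single m 1))
  convert hgram.map_re.smul (zero_le_four : (0 : ℝ) ≤ 4) using 1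
  ext m n
  simp only [Matrix.of_apply, Matrix.smul_apply, Matrix.map_apply, smul_eq_mul, inner_conj_symm,
    RCLike.star_def, RCLike.re_to_complex, RCLike.ofReal_eq_complex_ofReal]

/-- For a smooth multi-parameter family of density matrices with spectral decomposition
`ρ(θ) = Σ_k p_k(θ)|w_k(θ)⟩⟨w_k(θ)|`, `p_k > 0`, the matrix `C_Υ(θ) − C_L(θ)` with
entries `4 Re Σ_i p_i ⟨w_i^{(m)}|w_i⟩⟨w_i|w_i^{(n)}⟩` is positive semidefinite;
hence `C_L(θ) ≤ C_Υ(θ)` in the Loewner order. -/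
theorem CUpsilon_sub_CL_posSemidef_multi
    {d q : ℕ} (p : Fin d → (Fin q → ℝ) → ℝ)
    (w : Fin d → (Fin q → ℝ) → EuclideanSpace ℂ (Fin d))
    (hp : ∀ i x, 0 < p i x)
    (hpd : ∀ i, Differentiable ℝ (p i))
    (hwd : ∀ i, Differentiable ℝ (w i))
    (hON : ∀ x, Orthonormal ℂ (fun i => w i x)) :
    ∀ x : Fin q → ℝ,
      (Matrix.of (fun m n : Fin q =>
        4 * (∑ i, (p i x : ℂ) *
          ((inner ℂ (fderiv ℝ (w i) x (Pi.single m 1)) (w i x) : ℂ)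
            * (inner ℂ (w i x) (fderiv ℝ (w i) x (Pi.single n 1)) : ℂ))).re)).PosSemidef :=
  CUpsilon_sub_CL_posSemidef_multi_general p w hp
end
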